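/- In the game G₄: the supremum of the leader's expected reward over all leader strategy profiles equals 1 and is attained by some leader strategy profile; however, for every memory bound b ∈ ℕ, every leader strategy profile with memory bound b gives the leader expected reward strictly less than 1. Hence an optimal leader strategy profile of G₄ requires infinite memory. -/

import Mathlib

open scoped BigOperators

/-- A multi-player discounted sum game (MDSG) on sets of players `P`,
vertices `V` and actions `A`, all required to be finite (`A` nonempty).
The `owner` of a vertex chooses the action there; `tr` is the transition
function, `rew p v a` is the reward of player `p` for taking action `a`
at vertex `v`, `init` is the initial probability distribution on the
vertices, and `disc` is the discount factor. -/
structure MDSG (P V A : Type) : Type where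
  fin_P : Finite P
  fin_V : Finite V
  fin_A : Finite A
  nonempty_A : Nonempty A
  owner : V → P
  tr : V → A → V
  rew : P → V → A → ℝ
  init : V → ℝ
  init_nonneg : ∀ v, 0 ≤ init v
  init_sum : ∑' v, init v = 1
  disc : ℝ
  disc_pos : 0 < disc
  disc_lt_one : disc < 1

/-- A pure strategy profile: given the history (the list of vertex/action pairs
seen so far) and the current vertex, the owner of the current vertex chooses
an action.  The strategy of an individual player `p` is the restriction of the
profile to the vertices owned by `p`. -/
abbrev Profile (V A : Type) : Type := List (V × A) → V → A

namespace MDSG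

variable {P V A : Type}

/-- The pair (history, current vertex) after `n` steps of the play of `σ` from `v`. -/
def histState (G : MDSG P V A) (σ : Profile V A) (v : V) : ℕ → List (V × A) × V
  | 0 => ([], v)
  | n + 1 =>
    let s := G.histState σ v n
    (s.1 ++ [(s.2, σ s.1 s.2)], G.tr s.2 (σ s.1 s.2))

/-- The vertex visited at step `n` of the play of `σ` from `v`. -/
def playV (G : MDSG P V A) (σ : Profile V A) (v : V) (n : ℕ) : V :=
  (G.histState σ v n).2

/-- The action taken at step `n` of the play of `σ` from `v`. -/
def playA (G : MDSG P V A) (σ : Profile V A) (v : V) (n : ℕ) : A :=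
  σ (G.histState σ v n).1 (G.playV σ v n)

/-- The discounted reward of player `p` on the play of `σ` from `v`. -/
noncomputable def reward (G : MDSG P V A) (p : P) (σ : Profile V A) (v : V) : ℝ :=
  ∑' i : ℕ, G.rew p (G.playV σ v i) (G.playA σ v i) * G.disc ^ i

/-- The expected reward of player `p` under the strategy profile `σ`. -/
noncomputable def ER (G : MDSG P V A) (p : P) (σ : Profile V A) : ℝ :=
  ∑' v : V, G.init v * G.reward p σ v

/-- `σ'` differs from `σ` at most in the strategy of player `p`. -/
def DiffOnly (G : MDSG P V A) (σ σ' : Profile V A) (p : P) : Prop :=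
  ∀ h v, G.owner v ≠ p → σ' h v = σ h v

/-- Nash equilibrium: no player can profit from a unilateral deviation. -/
def IsNash (G : MDSG P V A) (σ : Profile V A) : Prop :=
  ∀ p σ', G.DiffOnly σ σ' p → G.ER p σ' ≤ G.ER p σ

/-- Leader strategy profile: no player other than the leader `l` can profit
from a unilateral deviation. -/
def IsLeaderSP (G : MDSG P V A) (l : P) (σ : Profile V A) : Prop :=
  ∀ p, p ≠ l → ∀ σ', G.DiffOnly σ σ' p → G.ER p σ' ≤ G.ER p σ

/-- `σ` is a (pure) strategy profile with memory bound `b`: there is a memory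
set `M` with `|M| ≤ b`, an initial memory state, a memory update function and
a usage function producing all the actions of `σ`. -/
def MemBound (G : MDSG P V A) (σ : Profile V A) (b : ℕ) : Prop :=
  ∃ n : ℕ, n ≤ b ∧ ∃ (m₀ : Fin n) (μ : Fin n → V × A → Fin n) (u : Fin n → V → A),
    ∀ h v, σ h v = u (h.foldl μ m₀) v

/-- `σ` is memoryless (positional): actions depend only on the current vertex. -/
def Positional (G : MDSG P V A) (σ : Profile V A) : Prop :=
  ∀ h h' v, σ h v = σ h' v

open Classical in
/-- Combination of a strategy for player `p` with a joint strategy of the other players. -/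
noncomputable def combine (G : MDSG P V A) (p : P) (τp τo : Profile V A) : Profile V A :=
  fun h v => if G.owner v = p then τp h v else τo h v

/-- The lower value of player `p` at vertex `v`: the supremum over the pure
strategies of `p` of the infimum over the joint pure strategies of the other
players of the reward of `p` on the resulting play from `v`. -/
noncomputable def lowerValue (G : MDSG P V A) (p : P) (v : V) : ℝ :=
  ⨆ τp : Profile V A, ⨅ τo : Profile V A, G.reward p (G.combine p τp τo) v

/-- The upper value of player `p` at vertex `v`. -/
noncomputable def upperValue (G : MDSG P V A) (p : P) (v : V) : ℝ :=
  ⨅ τo : Profile V A, ⨆ τp : Profile V A, G.reward p (G.combine p τp τo) v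

/-- The history `h` contains a deviation from `σ` at position `i`. -/
def DeviatesAt (G : MDSG P V A) (σ : Profile V A) (h : List (V × A)) (i : ℕ) : Prop :=
  ∃ hi : i < h.length, (h.get ⟨i, hi⟩).2 ≠ σ (h.take i) (h.get ⟨i, hi⟩).1

/-- Reward-and-punish profile: on every history that deviates from the
prescribed actions, every action depends only on the current vertex and on the
identity of the first player who deviated (all players follow a fixed
positional strategy depending only on the first deviator). -/
def IsRewardPunish (G : MDSG P V A) (σ : Profile V A) : Prop :=
  ∃ punish : P → V → A, ∀ (h : List (V × A)) (i : ℕ) (hi : i < h.length),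
    G.DeviatesAt σ h i → (∀ j, j < i → ¬ G.DeviatesAt σ h j) →
    ∀ v, σ h v = punish (G.owner (h.get ⟨i, hi⟩).1) v

/-- The outcome plays of `σ` are generated with compliance memory bound `b`:
on every history on which all players have complied, the actions of `σ` are
produced by a memory structure with at most `b` states. -/
def ComplianceMemBound (G : MDSG P V A) (σ : Profile V A) (b : ℕ) : Prop :=
  ∃ n : ℕ, n ≤ b ∧ ∃ (m₀ : Fin n) (μ : Fin n → V × A → Fin n) (u : Fin n → V → A),
    ∀ h : List (V × A), (∀ i, ¬ G.DeviatesAt σ h i) →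
      ∀ v, σ h v = u (h.foldl μ m₀) v

/-- The set of stationary mixed decision vectors: an assignment of a
probability distribution over the actions to every vertex. -/
def simplexD (V A : Type) : Set (V → A → ℝ) :=
  {d | ∀ v, (∀ a, 0 ≤ d v a) ∧ ∑' a, d v a = 1}

end MDSG
namespace MDSG

/-- The game `G₄` (Figure 5 of the paper): two players `0` (player 1) and `1`
(the leader); vertices `0, 1, 2` (representing vertices 1, 2, 3), where
vertices `0` and `2` belong to player 1 and vertex `1` to the leader; actions
`Bool`.  Vertex `0`: `true` moves to `1` with rewards `(1,0)`, `false` moves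
to `2` with rewards `(0,0)`.  Vertex `2` loops with rewards `(0,0)`.
Vertex `1` has two self-loops: `true` with rewards `(-1,1)` and `false` with
rewards `(0,0)`.  Initial distribution: point mass at `0`; discount factor
`2/3`. -/
noncomputable def G4 : MDSG (Fin 2) (Fin 3) Bool where
  fin_P := inferInstance
  fin_V := inferInstance
  fin_A := inferInstance
  nonempty_A := inferInstance
  owner := fun v => if v = 1 then 1 else 0
  tr := fun v a => if v = 0 then (if a then 1 else 2) else v
  rew := fun p v a =>
    if v = 0 then (if a then (if p = 0 then 1 else 0) else 0)
    else if v = 1 then (if a then (if p = 0 then -1 else 1) else 0)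
    else 0
  init := fun v => if v = 0 then 1 else 0
  init_nonneg := by intro v; (try dsimp only); split <;> norm_num
  init_sum := by simpa using tsum_ite_eq (0 : Fin 3) (1 : ℝ)
  disc := 2 / 3
  disc_pos := by norm_num
  disc_lt_one := by norm_num

end MDSG

/-!
Player 1 earns `1` by entering vertex `1` and then pays back exactly what the leader collects on
its self-loop there. Since player 1 could instead move to the sink `2`, in a leader strategy
profile the leader collects `∑ (2/3)^k` over a set of steps `k ≥ 1`, and this is at most `1`.
The value `1` is reached by a leader who loops according to the greedy expansion of `1` in
base `3/2`.

With finite memory, the pair (memory state, vertex) evolves by a self-map of a finite set, so the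
set of collecting steps is eventually periodic. Summing the periodic tail as a geometric series
turns `∑ (2/3)^k = 1` into the rational identity `(1 - x^q) (1 - F) = B` with `x = 2/3` and `F`,
`B` finite sums of positive powers of `x`. Its left side has 2-adic norm `1`, its right side
2-adic norm `< 1`.
-/

open Finset Function Filter Topology

def bitTerm {R : Type*} [MonoidWithZero R] (x : R) (s : ℕ → Bool) (k : ℕ) : R :=
  if s k then x ^ k else 0

@[simp, norm_cast]
theorem Rat.cast_bitTerm (x : ℚ) (s : ℕ → Bool) (k : ℕ) :
    ((bitTerm x s k : ℚ) : ℝ) = bitTerm (x : ℝ) s k := by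
  unfold bitTerm; split_ifs <;> simp

theorem bitTerm_nonneg {x : ℝ} (hx : 0 ≤ x) (s : ℕ → Bool) (k : ℕ) :
    0 ≤ bitTerm x s k := by
  unfold bitTerm; split_ifs <;> positivity

theorem summable_bitTerm {x : ℝ} (hx0 : 0 ≤ x) (hx1 : x < 1) (s : ℕ → Bool) :
    Summable (bitTerm x s) :=
  (summable_geometric_of_lt_one hx0 hx1).of_nonneg_of_le (bitTerm_nonneg hx0 s) fun k => by
    unfold bitTerm; split_ifs
    · exact le_rfl
    · positivity

noncomputable def greedyRem (x r : ℝ) : ℕ → ℝ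
  | 0 => r
  | k + 1 =>
    if x ^ (k + 1) ≤ greedyRem x r k then greedyRem x r k - x ^ (k + 1) else greedyRem x r k

noncomputable def greedyBits (x r : ℝ) : ℕ → Bool
  | 0 => false
  | k + 1 => decide (x ^ (k + 1) ≤ greedyRem x r k)

theorem greedyRem_succ (x r : ℝ) (k : ℕ) :
    greedyRem x r (k + 1) = greedyRem x r k - bitTerm x (greedyBits x r) (k + 1) := by
  simp only [greedyRem, bitTerm, greedyBits, decide_eq_true_eq]
  split_ifs <;> ring

theorem sum_range_bitTerm_greedyBits (x r : ℝ) (n : ℕ) :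
    ∑ k ∈ range (n + 1), bitTerm x (greedyBits x r) k = r - greedyRem x r n := by
  induction n with
  | zero => simp [bitTerm, greedyBits, greedyRem]
  | succ n ih => rw [sum_range_succ, ih, greedyRem_succ]; ring

theorem greedyRem_mem_Icc {x r : ℝ} (hx : 1 / 2 ≤ x) (hr0 : 0 ≤ r) (hr1 : r ≤ 1) (k : ℕ) :
    greedyRem x r k ∈ Set.Icc 0 (x ^ k) := by
  induction k with
  | zero => simpa [greedyRem] using ⟨hr0, hr1⟩
  | succ k ih =>
    obtain ⟨h0, h1⟩ := ih
    have hxk : 0 ≤ x ^ k := pow_nonneg (by linarith) k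
    simp only [greedyRem, pow_succ]
    split_ifs with h
    · constructor <;> nlinarith
    · exact ⟨h0, by linarith⟩

theorem hasSum_bitTerm_greedyBits {x r : ℝ} (hx : 1 / 2 ≤ x) (hx1 : x < 1) (hr0 : 0 ≤ r)
    (hr1 : r ≤ 1) : HasSum (bitTerm x (greedyBits x r)) r := by
  rw [hasSum_iff_tendsto_nat_of_nonneg (bitTerm_nonneg (by linarith) _),
    ← tendsto_add_atTop_iff_nat 1]
  simp_rw [sum_range_bitTerm_greedyBits]
  have hrem : Tendsto (greedyRem x r) atTop (𝓝 0) :=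
    squeeze_zero (fun k => (greedyRem_mem_Icc hx hr0 hr1 k).1)
      (fun k => (greedyRem_mem_Icc hx hr0 hr1 k).2)
      (tendsto_pow_atTop_nhds_zero_of_lt_one (by linarith) hx1)
  simpa using tendsto_const_nhds.sub hrem

theorem one_sub_mul_tsum_eq_sum_range {g : ℕ → ℝ} {c : ℝ} {q : ℕ} (hg : Summable g)
    (hshift : ∀ k, g (k + q) = c * g k) : (1 - c) * ∑' k, g k = ∑ k ∈ range q, g k := by
  have := hg.sum_add_tsum_nat_add q
  simp only [hshift, tsum_mul_left] at this
  linear_combination -this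

theorem padicNorm_one_sub_of_lt_one {p : ℕ} [Fact p.Prime] {z : ℚ} (hz : padicNorm p z < 1) :
    padicNorm p (1 - z) = 1 := by
  have hne : padicNorm p 1 ≠ padicNorm p (-z) := by
    rw [padicNorm.one, padicNorm.neg]
    exact hz.ne'
  rw [sub_eq_add_neg, padicNorm.add_eq_max_of_ne hne, padicNorm.one, padicNorm.neg,
    max_eq_left hz.le]

theorem padicNorm_pow_lt_one {p : ℕ} [Fact p.Prime] {x : ℚ} (hx : padicNorm p x < 1) {k : ℕ}
    (hk : k ≠ 0) : padicNorm p (x ^ k) < 1 := by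
  rw [IsAbsoluteValue.abv_pow (padicNorm p)]
  exact pow_lt_one₀ (padicNorm.nonneg x) hx hk

theorem padicNorm_bitTerm_lt_one {p : ℕ} [Fact p.Prime] {x : ℚ} (hx : padicNorm p x < 1)
    {s : ℕ → Bool} (hs0 : s 0 = false) (k : ℕ) : padicNorm p (bitTerm x s k) < 1 := by
  unfold bitTerm
  split_ifs with hk
  · exact padicNorm_pow_lt_one hx (by rintro rfl; simp [hs0] at hk)
  · simp

theorem tsum_bitTerm_ne_one {p : ℕ} [Fact p.Prime] {x : ℚ} (hx0 : 0 ≤ x) (hx1 : x < 1)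
    (hpx : padicNorm p x < 1) {s : ℕ → Bool} (hs0 : s 0 = false) {i q : ℕ} (hq : 0 < q)
    (hper : Periodic (fun k => s (k + i)) q) : ∑' k, bitTerm (x : ℝ) s k ≠ 1 := by
  intro hS
  have hsum := summable_bitTerm (x := (x : ℝ)) (by exact_mod_cast hx0) (by exact_mod_cast hx1) s
  have hshift : ∀ k, bitTerm (x : ℝ) s (k + q + i) = x ^ q * bitTerm (x : ℝ) s (k + i) := by
    intro k
    simp only [bitTerm, hper k]
    split_ifs <;> ring
  have hreal : (1 - (x : ℝ) ^ q) * (1 - ∑ k ∈ range i, bitTerm (x : ℝ) s k) =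
      ∑ k ∈ range q, bitTerm (x : ℝ) s (k + i) := by
    have htail :
        ∑' k, bitTerm (x : ℝ) s (k + i) = 1 - ∑ k ∈ range i, bitTerm (x : ℝ) s k := by
      linarith [hsum.sum_add_tsum_nat_add i]
    rw [← htail]
    exact one_sub_mul_tsum_eq_sum_range ((summable_nat_add_iff i).2 hsum) hshift
  have hrat : (1 - x ^ q) * (1 - ∑ k ∈ range i, bitTerm x s k) =
      ∑ k ∈ range q, bitTerm x s (k + i) := by
    exact_mod_cast hreal
  have hlt := padicNorm_bitTerm_lt_one hpx hs0
  apply_fun padicNorm p at hrat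
  rw [padicNorm.mul, padicNorm_one_sub_of_lt_one (padicNorm_pow_lt_one hpx hq.ne'),
    padicNorm_one_sub_of_lt_one (padicNorm.sum_lt' (fun k _ => hlt k) one_pos), one_mul] at hrat
  exact (padicNorm.sum_lt' (fun k _ => hlt (k + i)) one_pos).ne' hrat

theorem exists_periodic_iterate {α : Type*} [Finite α] (f : α → α) (x : α) :
    ∃ i q, 0 < q ∧ Periodic (fun k => f^[k + i] x) q := by
  obtain ⟨m, n, hne, heq⟩ := Finite.exists_ne_map_eq_of_infinite fun k => f^[k] x
  wlog hmn : m < n generalizing m n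
  · exact this n m hne.symm heq.symm (by omega)
  refine ⟨m, n - m, by omega, fun k => ?_⟩
  simp only
  rw [show k + (n - m) + m = k + n by omega, iterate_add_apply, ← heq, ← iterate_add_apply]

namespace MDSG

variable {P V A : Type}

theorem histState_fst_length (G : MDSG P V A) (σ : Profile V A) (v : V) (k : ℕ) :
    (G.histState σ v k).1.length = k := by
  induction k with
  | zero => rfl
  | succ k ih => simp [histState, ih]

theorem playV_succ (G : MDSG P V A) (σ : Profile V A) (v : V) (k : ℕ) :
    G.playV σ v (k + 1) = G.tr (G.playV σ v k) (G.playA σ v k) := rfl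

theorem summable_reward (G : MDSG P V A) (p : P) (σ : Profile V A) (v : V) :
    Summable fun i => G.rew p (G.playV σ v i) (G.playA σ v i) * G.disc ^ i := by
  have := G.fin_V
  have := G.fin_A
  obtain ⟨C, hC⟩ := (Set.finite_range fun va : V × A => |G.rew p va.1 va.2|).bddAbove
  refine .of_norm_bounded ((summable_geometric_of_lt_one G.disc_pos.le G.disc_lt_one).mul_left C)
    fun i => ?_
  rw [Real.norm_eq_abs, abs_mul, abs_pow, abs_of_pos G.disc_pos]
  exact mul_le_mul_of_nonneg_right (hC ⟨(_, _), rfl⟩) (pow_nonneg G.disc_pos.le i)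

theorem ER_eq_reward [DecidableEq V] (G : MDSG P V A) {v₀ : V}
    (hinit : ∀ v, G.init v = if v = v₀ then 1 else 0)
    (p : P) (σ : Profile V A) : G.ER p σ = G.reward p σ v₀ := by
  simp only [ER, hinit, ite_mul, one_mul, zero_mul]
  exact tsum_ite_eq v₀ _

theorem MemBound.exists_periodic_play {G : MDSG P V A} {σ : Profile V A} {b : ℕ}
    (hσ : G.MemBound σ b) (v : V) :
    ∃ i q, 0 < q ∧ Periodic (fun k => (G.playV σ v (k + i), G.playA σ v (k + i))) q := by
  have := G.fin_V
  obtain ⟨n, -, m₀, μ, u, hu⟩ := hσ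
  let step : Fin n × V → Fin n × V := fun s => (μ s.1 (s.2, u s.1 s.2), G.tr s.2 (u s.1 s.2))
  have horbit :
      ∀ k, ((G.histState σ v k).1.foldl μ m₀, G.playV σ v k) = step^[k] (m₀, v) := by
    intro k
    induction k with
    | zero => rfl
    | succ k ih =>
      rw [iterate_succ_apply', ← ih]
      simp [step, histState, playV, hu]
  obtain ⟨i, q, hq, hper⟩ := exists_periodic_iterate step (m₀, v)
  refine ⟨i, q, hq, ?_⟩
  convert hper.comp fun s => (s.2, u s.1 s.2) using 2 with k
  simp [← horbit, playA, hu]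

end MDSG

namespace MDSG.G4

theorem rew_one (v : Fin 3) (a : Bool) : G4.rew 1 v a = if v = 1 ∧ a then 1 else 0 := by
  fin_cases v <;> cases a <;> simp [G4]

theorem rew_zero_add_rew_one (v : Fin 3) (a : Bool) :
    G4.rew 0 v a + G4.rew 1 v a = if v = 0 ∧ a then 1 else 0 := by
  fin_cases v <;> cases a <;> simp [G4]

theorem tr_ne_zero (v : Fin 3) (a : Bool) : G4.tr v a ≠ 0 := by
  fin_cases v <;> cases a <;> simp [G4]

theorem playV_succ_zero (σ : Profile (Fin 3) Bool) (k : ℕ) :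
    G4.playV σ 0 (k + 1) = if σ [] 0 then 1 else 2 := by
  induction k with
  | zero => cases h : σ [] 0 <;> simp [playV, histState, h, G4]
  | succ k ih => rw [playV_succ, ih]; split <;> simp [G4]

theorem ER_eq_reward_zero (p : Fin 2) (σ : Profile (Fin 3) Bool) : G4.ER p σ = G4.reward p σ 0 :=
  G4.ER_eq_reward (fun _ => rfl) p σ

noncomputable def leaderCollects (σ : Profile (Fin 3) Bool) (k : ℕ) : Bool :=
  decide (G4.playV σ 0 k = 1) && G4.playA σ 0 k

theorem leaderCollects_zero (σ : Profile (Fin 3) Bool) : leaderCollects σ 0 = false := by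
  simp [leaderCollects, playV, histState]

theorem ER_one (σ : Profile (Fin 3) Bool) :
    G4.ER 1 σ = ∑' k, bitTerm (2 / 3 : ℝ) (leaderCollects σ) k := by
  rw [ER_eq_reward_zero, reward]
  congr 1 with k
  rw [rew_one, show G4.disc = 2 / 3 from rfl]
  simp only [bitTerm, leaderCollects, Bool.and_eq_true, decide_eq_true_eq]
  split_ifs <;> simp

theorem ER_zero_add_ER_one (σ : Profile (Fin 3) Bool) :
    G4.ER 0 σ + G4.ER 1 σ = if σ [] 0 then 1 else 0 := by
  rw [ER_eq_reward_zero, ER_eq_reward_zero, reward, reward,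
    ← (G4.summable_reward 0 σ 0).tsum_add (G4.summable_reward 1 σ 0)]
  simp only [← add_mul, rew_zero_add_rew_one]
  rw [tsum_eq_single 0]
  · simp [playA, playV, histState]
  · rintro (_ | k) hk
    · contradiction
    · simp [playV_succ, tr_ne_zero]

theorem ER_zero_nonneg_of_isLeaderSP {σ : Profile (Fin 3) Bool} (hσ : G4.IsLeaderSP 1 σ) :
    0 ≤ G4.ER 0 σ := by
  -- player 1 can always move to the sink vertex 2, where nobody earns anything
  let τ : Profile (Fin 3) Bool := fun h v => if v = 1 then σ h v else false
  have hτ : G4.DiffOnly σ τ 0 := fun h v hv => if_pos (by by_contra hv1; exact hv (if_neg hv1))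
  have hcollects : leaderCollects τ = fun _ => false := by
    funext k
    cases k with
    | zero => exact leaderCollects_zero τ
    | succ k => simp [leaderCollects, playV_succ_zero, τ]
  have hER : G4.ER 0 τ = 0 := by
    have hsum := ER_zero_add_ER_one τ
    rw [ER_one, hcollects] at hsum
    simpa [bitTerm, τ] using hsum
  exact hER ▸ hσ 0 (by decide) τ hτ

theorem ER_one_le_one_of_isLeaderSP {σ : Profile (Fin 3) Bool} (hσ : G4.IsLeaderSP 1 σ) :
    G4.ER 1 σ ≤ 1 := by
  have hsum := ER_zero_add_ER_one σ
  have hnonneg := ER_zero_nonneg_of_isLeaderSP hσ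
  split_ifs at hsum <;> linarith

theorem leaderCollects_of_follows {s : ℕ → Bool} (hs0 : s 0 = false) {σ : Profile (Fin 3) Bool}
    (hσ : ∀ h, σ h 1 = s h.length) : leaderCollects σ = fun k => σ [] 0 && s k := by
  funext k
  cases k with
  | zero => simp [leaderCollects_zero, hs0]
  | succ k =>
    cases h : σ [] 0 <;>
      simp [leaderCollects, playA, playV_succ_zero, h, hσ, histState_fst_length]

theorem ER_one_of_follows {s : ℕ → Bool} (hs0 : s 0 = false)
    (hs : HasSum (bitTerm (2 / 3 : ℝ) s) 1)
    {σ : Profile (Fin 3) Bool} (hσ : ∀ h, σ h 1 = s h.length) :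
    G4.ER 1 σ = if σ [] 0 then 1 else 0 := by
  rw [ER_one, leaderCollects_of_follows hs0 hσ]
  cases σ [] 0
  · simp [bitTerm]
  · simpa using hs.tsum_eq

theorem isLeaderSP_of_follows {s : ℕ → Bool} (hs0 : s 0 = false)
    (hs : HasSum (bitTerm (2 / 3 : ℝ) s) 1) {σ : Profile (Fin 3) Bool}
    (hσ : ∀ h, σ h 1 = s h.length) : G4.IsLeaderSP 1 σ := by
  have hER : ∀ τ : Profile (Fin 3) Bool, (∀ h, τ h 1 = s h.length) → G4.ER 0 τ = 0 :=
    fun τ hτ => by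
      linarith [ER_zero_add_ER_one τ, ER_one_of_follows hs0 hs hτ]
  intro p hp τ hτ
  obtain rfl : p = 0 := by omega
  rw [hER σ hσ, hER τ fun h => (hτ h 1 (by decide)).trans (hσ h)]

theorem ER_one_ne_one_of_memBound {σ : Profile (Fin 3) Bool} {b : ℕ} (hσ : G4.MemBound σ b) :
    G4.ER 1 σ ≠ 1 := by
  obtain ⟨i, q, hq, hper⟩ := hσ.exists_periodic_play 0
  have hpadic : padicNorm 2 (2 / 3 : ℚ) < 1 := by
    have h2 : padicNorm 2 (2 : ℚ) = 1 / 2 := by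
      simpa using padicNorm.padicNorm_p_of_prime (p := 2)
    have h3 : padicNorm 2 (3 : ℚ) = 1 := by
      simpa using padicNorm.padicNorm_of_prime_of_ne (p := 2) (q := 3) (by decide)
    rw [padicNorm.div, h2, h3]
    norm_num
  have := tsum_bitTerm_ne_one (by norm_num) (by norm_num) hpadic (leaderCollects_zero σ) hq
    (hper.comp fun va => decide (va.1 = 1) && va.2)
  rw [ER_one]
  simpa using this

noncomputable def optimalProfile : Profile (Fin 3) Bool :=
  fun h v => if v = 1 then greedyBits (2 / 3) 1 h.length else true

end MDSG.G4

open MDSG in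
/-- In the game `G₄`: the supremum of the leader's expected reward over all
leader strategy profiles equals `1` and is attained by some leader strategy
profile; however, for every memory bound `b`, every leader strategy profile
with memory bound `b` gives the leader expected reward strictly less than `1`.
Hence an optimal leader strategy profile of `G₄` requires infinite memory. -/
theorem optimal_leader_SP_needs_infinite_memory :
    (∃ σ : Profile (Fin 3) Bool, G4.IsLeaderSP 1 σ ∧ G4.ER 1 σ = 1) ∧
    (∀ σ : Profile (Fin 3) Bool, G4.IsLeaderSP 1 σ → G4.ER 1 σ ≤ 1) ∧
    (∀ (b : ℕ) (σ : Profile (Fin 3) Bool),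
      G4.MemBound σ b → G4.IsLeaderSP 1 σ → G4.ER 1 σ < 1) := by
  have hs : HasSum (bitTerm (2 / 3 : ℝ) (greedyBits (2 / 3) 1)) 1 :=
    hasSum_bitTerm_greedyBits (by norm_num) (by norm_num) zero_le_one le_rfl
  have hfollows : ∀ h, G4.optimalProfile h 1 = greedyBits (2 / 3) 1 h.length := fun _ => rfl
  refine ⟨⟨G4.optimalProfile, G4.isLeaderSP_of_follows rfl hs hfollows, ?_⟩,
    fun σ hσ => G4.ER_one_le_one_of_isLeaderSP hσ, fun b σ hb hσ =>
      (G4.ER_one_le_one_of_isLeaderSP hσ).lt_of_ne (G4.ER_one_ne_one_of_memBound hb)⟩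
  rw [G4.ER_one_of_follows rfl hs hfollows]
  rfl
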